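/- Let G be a 2-cell embedding of a graph on a surface Σ, let F be a noncontractible cycle of G, and let 𝓕 be a family of facial subgraphs of G whose union contains F. If every element of 𝓕 is a triangle, then the edge-width of G is at most |𝓕| + 2. -/

import Mathlib

open Set

/-- An embedding (a drawing) of a simple graph `G` in a topological space `X`: vertices are
mapped to distinct points, each edge to an arc (a `Path`) between its endpoints, arcs are
simple, avoid all vertex points in their interiors, and distinct edges meet only at
common endpoints. -/
structure SurfaceEmbedding {V : Type*} (X : Type*) [TopologicalSpace X]
    (G : SimpleGraph V) where
  pos : V → X
  pos_inj : Function.Injective pos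
  arc : ∀ {u v : V}, G.Adj u v → Path (pos u) (pos v)
  arc_symm : ∀ {u v : V} (h : G.Adj u v), Set.range ⇑(arc h.symm) = Set.range ⇑(arc h)
  arc_inj : ∀ {u v : V} (h : G.Adj u v), Function.Injective ⇑(arc h)
  arc_avoid : ∀ {u v : V} (h : G.Adj u v) (t : unitInterval), t ≠ 0 → t ≠ 1 →
    arc h t ∉ Set.range pos
  arc_disjoint : ∀ {u v u' v' : V} (h : G.Adj u v) (h' : G.Adj u' v'),
    s(u, v) ≠ s(u', v') → ∀ (t t' : unitInterval), t ≠ 0 → t ≠ 1 → arc h t ≠ arc h' t'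

variable {V : Type*} {X : Type*} [TopologicalSpace X] {G : SimpleGraph V}

/-- The set of points of `X` covered by the embedding. -/
def SurfaceEmbedding.image (E : SurfaceEmbedding X G) : Set X :=
  Set.range E.pos ∪ ⋃ (u : V) (v : V) (h : G.Adj u v), Set.range ⇑(E.arc h)

/-- The continuous path traced out in `X` by a walk of `G`. -/
noncomputable def SurfaceEmbedding.pathOfWalk (E : SurfaceEmbedding X G) :
    ∀ {u v : V}, G.Walk u v → Path (E.pos u) (E.pos v)
  | _, _, SimpleGraph.Walk.nil => Path.refl _
  | _, _, SimpleGraph.Walk.cons h p => (E.arc h).trans (E.pathOfWalk p)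

/-- A cycle of `G` is noncontractible in `X` if the loop it traces is not homotopic
(rel endpoints) to the constant loop. -/
def SurfaceEmbedding.Noncontractible (E : SurfaceEmbedding X G) {v : V}
    (w : G.Walk v v) : Prop :=
  ¬ (E.pathOfWalk w).Homotopic (Path.refl (E.pos v))

/-- The embedding is a 2-cell embedding: every face (connected component of the complement
of the drawing) is an open disc, i.e. homeomorphic to the plane. -/
def SurfaceEmbedding.IsTwoCell (E : SurfaceEmbedding X G) : Prop :=
  ∀ p : X, p ∉ E.image →
    Nonempty (↥(connectedComponentIn E.imageᶜ p) ≃ₜ (ℝ × ℝ))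

-- ### infrastructure
open CategoryTheory FundamentalGroupoid SimpleGraph

attribute [local instance] Path.Homotopic.setoid

/-- The class of a path as a morphism in the fundamental groupoid. -/
noncomputable def pcl {x y : X} (p : Path x y) :
    (FundamentalGroupoid.mk x) ⟶ (FundamentalGroupoid.mk y) := ⟦p⟧

lemma pcl_trans {x y z : X} (p : Path x y) (q : Path y z) :
    pcl (p.trans q) = pcl p ≫ pcl q := Path.Homotopic.Quotient.mk_trans p q

lemma pcl_refl (x : X) : pcl (Path.refl x) = 𝟙 (FundamentalGroupoid.mk x) := rfl

lemma pcl_symm {x y : X} (p : Path x y) : pcl p.symm = inv (pcl p) := by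
  have : pcl p ≫ pcl p.symm = 𝟙 _ := by
    rw [← pcl_trans, ← pcl_refl]
    exact Quotient.sound ⟨(Path.Homotopy.reflTransSymm p).symm⟩
  exact IsIso.eq_inv_of_hom_inv_id this

lemma pcl_eq_iff {x y : X} (p q : Path x y) : pcl p = pcl q ↔ p.Homotopic q :=
  Quotient.eq

namespace SurfaceEmbedding
variable (E : SurfaceEmbedding X G)

lemma pathOfWalk_cons {u v w : V} (h : G.Adj u v) (p : G.Walk v w) :
    E.pathOfWalk (Walk.cons h p) = (E.arc h).trans (E.pathOfWalk p) := rfl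

lemma pathOfWalk_nil {u : V} : E.pathOfWalk (Walk.nil : G.Walk u u) = Path.refl _ := rfl

lemma noncontractible_iff {v : V} (w : G.Walk v v) :
    E.Noncontractible w ↔ pcl (E.pathOfWalk w) ≠ 𝟙 (FundamentalGroupoid.mk (E.pos v)) := by
  rw [Ne, ← pcl_refl, pcl_eq_iff]; rfl

lemma pcl_pathOfWalk_append {u v w : V} (p : G.Walk u v) (q : G.Walk v w) :
    pcl (E.pathOfWalk (p.append q)) = pcl (E.pathOfWalk p) ≫ pcl (E.pathOfWalk q) := by
  induction p with
  | nil => rw [Walk.nil_append, pathOfWalk_nil, pcl_refl, Category.id_comp]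
  | cons h p ih =>
      rw [Walk.cons_append, pathOfWalk_cons, pathOfWalk_cons, pcl_trans, pcl_trans, ih,
        Category.assoc]

lemma pcl_pathOfWalk_concat {u v w : V} (p : G.Walk u v) (h : G.Adj v w) :
    pcl (E.pathOfWalk (p.concat h)) = pcl (E.pathOfWalk p) ≫ pcl (E.arc h) := by
  rw [Walk.concat_eq_append, pcl_pathOfWalk_append, pathOfWalk_cons, pathOfWalk_nil,
    pcl_trans, pcl_refl, Category.comp_id]

end SurfaceEmbedding

section ArcSymm
variable [T2Space X] (E : SurfaceEmbedding X G)

lemma pcl_arc_symm {u v : V} (h : G.Adj u v) :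
    pcl (E.arc h.symm) = inv (pcl (E.arc h)) := by
  rw [← pcl_symm]
  set p := E.arc h with hp
  -- homeomorphism from I to the range of p
  have hcont : Continuous fun t => (⟨p t, mem_range_self t⟩ : Set.range ⇑p) :=
    p.continuous.subtype_mk _
  let e : unitInterval ≃ Set.range ⇑p := Equiv.ofInjective ⇑p (E.arc_inj h)
  have he : Continuous e := hcont
  let Φ : unitInterval ≃ₜ Set.range ⇑p := he.homeoOfEquivCompactToT2
  have hmem : ∀ t, E.arc h.symm t ∈ Set.range ⇑p := by
    intro t
    rw [← E.arc_symm h]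
    exact mem_range_self t
  let g : unitInterval → unitInterval := fun t => Φ.symm ⟨E.arc h.symm t, hmem t⟩
  have hg : Continuous g :=
    Φ.symm.continuous.comp ((E.arc h.symm).continuous.subtype_mk _)
  have hpg : ∀ t, p (g t) = E.arc h.symm t := by
    intro t
    have := Φ.apply_symm_apply ⟨E.arc h.symm t, hmem t⟩
    have h2 : (Φ (g t) : X) = E.arc h.symm t := by rw [this]
    exact h2
  have hg0 : g 0 = 1 := by
    apply E.arc_inj h
    rw [hpg]
    simp
  have hg1 : g 1 = 0 := by
    apply E.arc_inj h
    rw [hpg]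
    simp
  let f : unitInterval → unitInterval := fun t => unitInterval.symm (g t)
  have hf : Continuous f := unitInterval.continuous_symm.comp hg
  have hf0 : f 0 = 0 := by simp [f, hg0]
  have hf1 : f 1 = 1 := by simp [f, hg1]
  have key : E.arc h.symm = p.symm.reparam f hf hf0 hf1 := by
    ext t
    show E.arc h.symm t = p.symm (f t)
    rw [← hpg t]
    show p (g t) = p (unitInterval.symm (unitInterval.symm (g t)))
    rw [unitInterval.symm_symm]
  rw [pcl_eq_iff, key]
  exact ⟨(Path.Homotopy.reparam p.symm f hf hf0 hf1).symm⟩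

end ArcSymm

section TriCase
variable [T2Space X] (E : SurfaceEmbedding X G)

lemma tri_case {k : ℕ} {a b c : Fin k → V}
    (hab : ∀ i, G.Adj (a i) (b i)) (hbc : ∀ i, G.Adj (b i) (c i))
    (hca : ∀ i, G.Adj (c i) (a i)) (i : Fin k)
    (hT : pcl (E.arc (hab i)) ≫ pcl (E.arc (hbc i)) ≫ pcl (E.arc (hca i)) =
      𝟙 (FundamentalGroupoid.mk (E.pos (a i))))
    {x u w : V} (hxu : G.Adj x u) (hwx : G.Adj w x)
    (h1 : s(x, u) = s(a i, b i) ∨ s(x, u) = s(b i, c i) ∨ s(x, u) = s(c i, a i))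
    (h2 : s(w, x) = s(a i, b i) ∨ s(w, x) = s(b i, c i) ∨ s(w, x) = s(c i, a i))
    (hne : s(x, u) ≠ s(w, x)) :
    ∃ h₃ : G.Adj w u,
      (s(w, u) = s(a i, b i) ∨ s(w, u) = s(b i, c i) ∨ s(w, u) = s(c i, a i)) ∧
      pcl (E.arc hwx) ≫ pcl (E.arc hxu) = pcl (E.arc h₃) := by
  have hA : pcl (E.arc (hab i)) ≫ pcl (E.arc (hbc i)) ≫ pcl (E.arc (hca i)) =
      𝟙 (FundamentalGroupoid.mk (E.pos (a i))) := hT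
  generalize hAeq : pcl (E.arc (hab i)) = A at hA
  generalize hBeq : pcl (E.arc (hbc i)) = B at hA
  generalize hCeq : pcl (E.arc (hca i)) = C at hA
  have hBC : B ≫ C = inv A := IsIso.eq_inv_of_hom_inv_id hA
  have hAB : A ≫ B = inv C := by
    refine IsIso.eq_inv_of_inv_hom_id ?_
    rw [Category.assoc]; exact hA
  have hCA : C ≫ A = inv B := by
    refine IsIso.eq_inv_of_inv_hom_id ?_
    rw [Category.assoc, hAB]; simp
  have hBA : inv B ≫ inv A = C := by rw [← hBC]; simp
  have hCB : inv C ≫ inv B = A := by rw [← hCA]; simp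
  have hAC : inv A ≫ inv C = B := by rw [← hAB]; simp
  rcases h1 with h1 | h1 | h1 <;> rcases h2 with h2 | h2 | h2 <;>
    rw [Sym2.eq_iff] at h1 h2 <;>
    rcases h1 with ⟨rfl, rfl⟩ | ⟨rfl, rfl⟩ <;>
    rcases h2 with ⟨rfl, h22⟩ | ⟨rfl, h22⟩
  all_goals try exact absurd h22 (hab i).ne
  all_goals try exact absurd h22 (hab i).ne'
  all_goals try exact absurd h22 (hbc i).ne
  all_goals try exact absurd h22 (hbc i).ne'
  all_goals try exact absurd h22 (hca i).ne
  all_goals try exact absurd h22 (hca i).ne'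
  all_goals try exact absurd Sym2.eq_swap hne
  -- survivor 2 : x = b, u = a, w = c
  · refine ⟨hca i, Or.inr (Or.inr rfl), ?_⟩
    have e1 : pcl (E.arc hwx) = inv B := by
      have : pcl (E.arc ((hbc i).symm)) = inv B := by rw [pcl_arc_symm (h := hbc i), hBeq]
      exact this
    have e2 : pcl (E.arc hxu) = inv A := by
      have : pcl (E.arc ((hab i).symm)) = inv A := by rw [pcl_arc_symm (h := hab i), hAeq]
      exact this
    have e3 : pcl (E.arc (hca i)) = C := by rw [← hCeq]
    rw [e1, e2, e3]; exact hBA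
  -- survivor 1 : x = a, u = b, w = c
  · refine ⟨(hbc i).symm, Or.inr (Or.inl Sym2.eq_swap), ?_⟩
    have e1 : pcl (E.arc hwx) = C := by rw [← hCeq]
    have e2 : pcl (E.arc hxu) = A := by rw [← hAeq]
    have e3 : pcl (E.arc ((hbc i).symm)) = inv B := by
      rw [pcl_arc_symm (h := hbc i), hBeq]
    rw [e1, e2, e3]; exact hCA
  -- survivor 3 : x = b, u = c, w = a
  · refine ⟨(hca i).symm, Or.inr (Or.inr Sym2.eq_swap), ?_⟩
    have e1 : pcl (E.arc hwx) = A := by rw [← hAeq]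
    have e2 : pcl (E.arc hxu) = B := by rw [← hBeq]
    have e3 : pcl (E.arc ((hca i).symm)) = inv C := by rw [pcl_arc_symm (h := hca i), hCeq]
    rw [e1, e2, e3]; exact hAB
  -- survivor 4 : x = c, u = b, w = a
  · refine ⟨hab i, Or.inl rfl, ?_⟩
    have e1 : pcl (E.arc hwx) = inv C := by
      have : pcl (E.arc ((hca i).symm)) = inv C := by rw [pcl_arc_symm (h := hca i), hCeq]
      exact this
    have e2 : pcl (E.arc hxu) = inv B := by
      have : pcl (E.arc ((hbc i).symm)) = inv B := by rw [pcl_arc_symm (h := hbc i), hBeq]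
      exact this
    have e3 : pcl (E.arc (hab i)) = A := by rw [← hAeq]
    rw [e1, e2, e3]; exact hCB
  -- survivor 6 : x = a, u = c, w = b
  · refine ⟨hbc i, Or.inr (Or.inl rfl), ?_⟩
    have e1 : pcl (E.arc hwx) = inv A := by
      have : pcl (E.arc ((hab i).symm)) = inv A := by rw [pcl_arc_symm (h := hab i), hAeq]
      exact this
    have e2 : pcl (E.arc hxu) = inv C := by
      have : pcl (E.arc ((hca i).symm)) = inv C := by rw [pcl_arc_symm (h := hca i), hCeq]
      exact this
    have e3 : pcl (E.arc (hbc i)) = B := by rw [← hBeq]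
    rw [e1, e2, e3]; exact hAC

  -- survivor 5 : x = c, u = a, w = b
  · refine ⟨(hab i).symm, Or.inl Sym2.eq_swap, ?_⟩
    have e1 : pcl (E.arc hwx) = B := by rw [← hBeq]
    have e2 : pcl (E.arc hxu) = C := by rw [← hCeq]
    have e3 : pcl (E.arc ((hab i).symm)) = inv A := by rw [pcl_arc_symm (h := hab i), hAeq]
    rw [e1, e2, e3]; exact hBC
end TriCase

section Surgery
open SimpleGraph Walk
variable [T2Space X] [DecidableEq V] (E : SurfaceEmbedding X G)

/-- In a path from `u` to `w`, if the edge `s(u,w)` occurs then the path is a single edge. -/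
lemma path_edge_ends {u w : V} (q : G.Walk u w) (hq : q.IsPath) (he : s(u, w) ∈ q.edges) :
    q.length = 1 := by
  cases q with
  | nil => simp at he
  | cons h r =>
    rw [Walk.edges_cons, List.mem_cons] at he
    rcases he with he | he
    · rw [Sym2.eq_iff] at he
      rcases he with ⟨-, rfl⟩ | ⟨h1, h2⟩
      · have hr : r = Walk.nil := by
          have := ((Walk.cons_isPath_iff _ _).1 hq).1
          simpa using this
        simp [hr]
      · exact absurd h1 h.ne
    · exfalso
      have hu : u ∈ r.support := by
        have : ∃ y, s(u, w) = s(u, y) := ⟨w, rfl⟩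
        exact r.fst_mem_support_of_mem_edges he
      exact ((Walk.cons_isPath_iff _ _).1 hq).2 hu

lemma pcl_rotate_ne {v x : V} (F : G.Walk v v) (hx : x ∈ F.support)
    (h : pcl (E.pathOfWalk F) ≠ 𝟙 (FundamentalGroupoid.mk (E.pos v))) :
    pcl (E.pathOfWalk (F.rotate x hx)) ≠ 𝟙 (FundamentalGroupoid.mk (E.pos x)) := by
  intro hC
  apply h
  have hC' : pcl (E.pathOfWalk ((F.dropUntil x hx).append (F.takeUntil x hx))) =
      𝟙 (FundamentalGroupoid.mk (E.pos x)) := hC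
  rw [E.pcl_pathOfWalk_append] at hC'
  have h2 : pcl (E.pathOfWalk (F.takeUntil x hx)) =
      inv (pcl (E.pathOfWalk (F.dropUntil x hx))) := IsIso.eq_inv_of_hom_inv_id hC'
  have h3 : pcl (E.pathOfWalk (F.takeUntil x hx)) ≫
      pcl (E.pathOfWalk (F.dropUntil x hx)) = 𝟙 (FundamentalGroupoid.mk (E.pos v)) := by
    rw [h2]; simp
  rw [← E.pcl_pathOfWalk_append] at h3
  rw [← F.take_spec hx]
  exact h3

lemma shared_vertex {k : ℕ} {a b c : Fin k → V} {i : Fin k} {e e' : Sym2 V}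
    (h1 : e = s(a i, b i) ∨ e = s(b i, c i) ∨ e = s(c i, a i))
    (h2 : e' = s(a i, b i) ∨ e' = s(b i, c i) ∨ e' = s(c i, a i)) :
    ∃ x, x ∈ e ∧ x ∈ e' := by
  rcases h1 with rfl | rfl | rfl <;> rcases h2 with rfl | rfl | rfl
  · exact ⟨a i, by simp, by simp⟩
  · exact ⟨b i, by simp, by simp⟩
  · exact ⟨a i, by simp, by simp⟩
  · exact ⟨b i, by simp, by simp⟩
  · exact ⟨b i, by simp, by simp⟩
  · exact ⟨c i, by simp, by simp⟩
  · exact ⟨a i, by simp, by simp⟩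
  · exact ⟨c i, by simp, by simp⟩
  · exact ⟨c i, by simp, by simp⟩

lemma shortcut_key {k : ℕ} {a b c : Fin k → V}
    (hab : ∀ i, G.Adj (a i) (b i)) (hbc : ∀ i, G.Adj (b i) (c i))
    (hca : ∀ i, G.Adj (c i) (a i))
    (hT : ∀ i, pcl (E.arc (hab i)) ≫ pcl (E.arc (hbc i)) ≫ pcl (E.arc (hca i)) =
      𝟙 (FundamentalGroupoid.mk (E.pos (a i)))) :
    ∀ n : ℕ, ∀ (v : V) (F : G.Walk v v), F.length = n → F.IsCycle →
      pcl (E.pathOfWalk F) ≠ 𝟙 (FundamentalGroupoid.mk (E.pos v)) →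
      (∀ e ∈ F.edges, ∃ i, e = s(a i, b i) ∨ e = s(b i, c i) ∨ e = s(c i, a i)) →
      ∃ (w₀ : V) (w : G.Walk w₀ w₀), w.IsCycle ∧ E.Noncontractible w ∧ w.length ≤ k + 2 := by
  intro n
  induction n using Nat.strong_induction_on with
  | _ n ih =>
  intro v F hlen hcyc hnc hcov
  by_cases hle : n ≤ k + 2
  · exact ⟨v, F, hcyc, (E.noncontractible_iff F).2 hnc, hlen ▸ hle⟩
  push_neg at hle
  have hn3 : 3 ≤ n := hlen ▸ hcyc.three_le_length
  -- pigeonhole: two distinct edges of F in the same triangle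
  have hene : F.edges ≠ [] := by
    intro h0
    have h1 := F.length_edges
    rw [h0] at h1
    simp at h1
    omega
  obtain ⟨e₀, he₀⟩ := List.exists_mem_of_ne_nil _ hene
  obtain ⟨i₀, -⟩ := hcov e₀ he₀
  classical
  let f : Sym2 V → Fin k := fun e =>
    if h : ∃ i, e = s(a i, b i) ∨ e = s(b i, c i) ∨ e = s(c i, a i) then h.choose else i₀
  have hf : ∀ e ∈ F.edges, e = s(a (f e), b (f e)) ∨ e = s(b (f e), c (f e)) ∨
      e = s(c (f e), a (f e)) := by
    intro e he
    have h := hcov e he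
    simp only [f, dif_pos h]
    exact h.choose_spec
  have hcard : (Finset.univ : Finset (Fin k)).card < F.edges.toFinset.card := by
    rw [List.toFinset_card_of_nodup hcyc.edges_nodup, Finset.card_univ, Fintype.card_fin,
      F.length_edges, hlen]
    omega
  obtain ⟨e, he, e', he', hee', hfe⟩ :=
    Finset.exists_ne_map_eq_of_card_lt_of_maps_to hcard (fun e _ => Finset.mem_univ (f e))
  rw [List.mem_toFinset] at he he'
  set i := f e with hi
  have hkpos : 0 < k := i.pos
  have tpe : e = s(a i, b i) ∨ e = s(b i, c i) ∨ e = s(c i, a i) := by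
    have h1 := hf e he; rwa [← hi] at h1
  have tpe' : e' = s(a i, b i) ∨ e' = s(b i, c i) ∨ e' = s(c i, a i) := by
    have h1 := hf e' he'; rwa [← hfe] at h1
  obtain ⟨x, hxe, hxe'⟩ := shared_vertex tpe tpe'
  obtain ⟨y, hey⟩ := Sym2.mem_iff_exists.1 hxe
  have hxsup : x ∈ F.support := F.fst_mem_support_of_mem_edges (hey ▸ he)
  -- rotate F to x
  set C := F.rotate x hxsup with hCdef
  have hCcyc : C.IsCycle := hcyc.rotate hxsup
  have hCrot : C.edges ~r F.edges := F.rotate_edges x hxsup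
  have hCmem : ∀ e'', e'' ∈ C.edges ↔ e'' ∈ F.edges := fun e'' => hCrot.mem_iff
  have hClen : C.length = n := by
    have h1 := hCrot.perm.length_eq
    rw [← C.length_edges, h1, F.length_edges, hlen]
  have hCnc := pcl_rotate_ne E F hxsup hnc
  -- decompose C = cons hxu (q.concat hwx)
  have hCnnil : ¬ C.Nil := by rw [Walk.not_nil_iff_lt_length, hClen]; omega
  obtain ⟨u, hxu, rest, hCeq⟩ := Walk.not_nil_iff.1 hCnnil
  have hrlen := congrArg Walk.length hCeq
  rw [Walk.length_cons, hClen] at hrlen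
  have hrestnnil : ¬ rest.reverse.Nil := by
    rw [Walk.not_nil_iff_lt_length, Walk.length_reverse]
    omega
  obtain ⟨w, hxw, q', hq'⟩ := Walk.not_nil_iff.1 hrestnnil
  have hrest : rest = q'.reverse.concat hxw.symm := by
    rw [← rest.reverse_reverse, hq', Walk.reverse_cons]
    simp [Walk.concat_eq_append]
  set q : G.Walk u w := q'.reverse with hqdef
  have hwx : G.Adj w x := hxw.symm
  have hCeq2 : C = Walk.cons hxu (q.concat hwx) := by rw [hCeq, hrest]
  have hqlen : q.length = n - 2 := by
    have h1 := congrArg Walk.length hCeq2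
    rw [Walk.length_cons, Walk.length_concat, hClen] at h1
    omega
  -- structure facts
  have hcons := (Walk.cons_isCycle_iff _ _).1 (hCeq2 ▸ hCcyc)
  have hnd : (q.support ++ [x]).Nodup := by
    have h1 := hcons.1
    rw [Walk.isPath_def, Walk.support_concat] at h1
    exact h1
  have hqpath : q.IsPath := by
    rw [Walk.isPath_def]
    exact (List.nodup_append.1 hnd).1
  have hxq : x ∉ q.support := by
    intro hx'
    exact (List.nodup_append.1 hnd).2.2 x hx' x (List.mem_singleton_self x) rfl
  have hCE : C.edges = s(x, u) :: (q.edges ++ [s(w, x)]) := by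
    rw [hCeq2]
    simp [Walk.edges_concat, List.concat_eq_append]
  -- any edge of C containing x is the first or the last edge
  have hinc : ∀ e'' ∈ C.edges, x ∈ e'' → e'' = s(x, u) ∨ e'' = s(w, x) := by
    intro e'' hmem hxm
    rw [hCE, List.mem_cons, List.mem_append, List.mem_singleton] at hmem
    rcases hmem with h | h | h
    · exact Or.inl h
    · exfalso
      obtain ⟨z, rfl⟩ := Sym2.mem_iff_exists.1 hxm
      exact hxq (q.fst_mem_support_of_mem_edges h)
    · exact Or.inr h
  have he1 : e = s(x, u) ∨ e = s(w, x) := hinc _ ((hCmem _).2 he) (hey ▸ hxe)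
  have he2 : e' = s(x, u) ∨ e' = s(w, x) := hinc _ ((hCmem _).2 he') hxe'
  have hkey : (s(x, u) = s(a i, b i) ∨ s(x, u) = s(b i, c i) ∨ s(x, u) = s(c i, a i)) ∧
      (s(w, x) = s(a i, b i) ∨ s(w, x) = s(b i, c i) ∨ s(w, x) = s(c i, a i)) ∧
      s(x, u) ≠ s(w, x) := by
    rcases he1 with h1 | h1 <;> rcases he2 with h2 | h2
    · exact absurd (h1.trans h2.symm) hee'
    · exact ⟨h1 ▸ tpe, h2 ▸ tpe', fun hc => hee' ((h1.trans hc).trans h2.symm)⟩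
    · exact ⟨h2 ▸ tpe', h1 ▸ tpe, fun hc => hee' ((h1.trans hc.symm).trans h2.symm)⟩
    · exact absurd (h1.trans h2.symm) hee'
  obtain ⟨hpxu, hpwx, hpne⟩ := hkey
  obtain ⟨h₃, hpat3, heq⟩ := tri_case E hab hbc hca i (hT i) hxu hwx hpxu hpwx hpne
  -- the shortcut cycle
  set C₂ : G.Walk w w := Walk.cons h₃ q with hC₂def
  have hC₂len : C₂.length = n - 1 := by
    rw [hC₂def, Walk.length_cons, hqlen]
    omega
  have hC₂cyc : C₂.IsCycle := by
    rw [hC₂def, Walk.cons_isCycle_iff]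
    refine ⟨hqpath, fun hmem => ?_⟩
    have h1 := path_edge_ends q hqpath (by rwa [Sym2.eq_swap] at hmem)
    omega
  have hC₂nc : pcl (E.pathOfWalk C₂) ≠ 𝟙 (FundamentalGroupoid.mk (E.pos w)) := by
    intro hnull
    apply hCnc
    rw [hC₂def, E.pathOfWalk_cons, pcl_trans] at hnull
    have hq3 : pcl (E.pathOfWalk q) = inv (pcl (E.arc h₃)) :=
      IsIso.eq_inv_of_hom_inv_id hnull
    have hxu3 : pcl (E.arc hxu) = inv (pcl (E.arc hwx)) ≫ pcl (E.arc h₃) := by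
      rw [← heq]; simp
    rw [← hCdef, hCeq2, E.pathOfWalk_cons, pcl_trans, E.pcl_pathOfWalk_concat, hq3, hxu3]
    simp
  have hcov₂ : ∀ e'' ∈ C₂.edges,
      ∃ j, e'' = s(a j, b j) ∨ e'' = s(b j, c j) ∨ e'' = s(c j, a j) := by
    intro e'' hmem
    rw [hC₂def, Walk.edges_cons, List.mem_cons] at hmem
    rcases hmem with rfl | hmem
    · exact ⟨i, hpat3⟩
    · apply hcov
      rw [← hCmem, hCE]
      simp [hmem]
  exact ih (n - 1) (by omega) w C₂ hC₂len hC₂cyc hC₂nc hcov₂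

end Surgery

theorem edge_width_le_of_cycle_in_facial_triangles'
    {V : Type*} [Fintype V] {X : Type*} [TopologicalSpace X] [T2Space X]
    [CompactSpace X] [ConnectedSpace X] [ChartedSpace (EuclideanSpace ℝ (Fin 2)) X]
    (G : SimpleGraph V) (E : SurfaceEmbedding X G)
    (v₀ : V) (F : G.Walk v₀ v₀) (hF : F.IsCycle) (hFnc : E.Noncontractible F)
    (k : ℕ) (a b c : Fin k → V)
    (hab : ∀ i, G.Adj (a i) (b i)) (hbc : ∀ i, G.Adj (b i) (c i))
    (hca : ∀ i, G.Adj (c i) (a i))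
    (hcover : ∀ e ∈ F.edges, ∃ i, e = s(a i, b i) ∨ e = s(b i, c i) ∨ e = s(c i, a i)) :
    ∃ (w₀ : V) (w : G.Walk w₀ w₀), w.IsCycle ∧ E.Noncontractible w ∧
      w.length ≤ k + 2 := by
  classical
  by_cases hex : ∃ i, E.Noncontractible
      (SimpleGraph.Walk.cons (hab i) (SimpleGraph.Walk.cons (hbc i)
        (SimpleGraph.Walk.cons (hca i) SimpleGraph.Walk.nil)))
  · obtain ⟨i, hi⟩ := hex
    have hkpos : 0 < k := i.pos
    refine ⟨a i, _, ?_, hi, ?_⟩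
    · rw [SimpleGraph.Walk.cons_isCycle_iff]
      constructor
      · rw [SimpleGraph.Walk.cons_isPath_iff]
        constructor
        · rw [SimpleGraph.Walk.cons_isPath_iff]
          refine ⟨SimpleGraph.Walk.IsPath.nil, ?_⟩
          simp [(hca i).ne]
        · simp [(hbc i).ne, (hab i).ne']
      · simp only [SimpleGraph.Walk.edges_cons, SimpleGraph.Walk.edges_nil,
          List.mem_cons, List.not_mem_nil, or_false, List.mem_singleton]
        simp [Sym2.eq_iff, (hab i).ne, (hbc i).ne, (hca i).ne']
    · simp only [SimpleGraph.Walk.length_cons, SimpleGraph.Walk.length_nil]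
      omega
  · push_neg at hex
    have hT : ∀ i, pcl (E.arc (hab i)) ≫ pcl (E.arc (hbc i)) ≫ pcl (E.arc (hca i)) =
        𝟙 (FundamentalGroupoid.mk (E.pos (a i))) := by
      intro i
      have hom := not_not.1 (hex i)
      have h1 : pcl (E.pathOfWalk (SimpleGraph.Walk.cons (hab i) (SimpleGraph.Walk.cons (hbc i)
          (SimpleGraph.Walk.cons (hca i) SimpleGraph.Walk.nil)))) =
          𝟙 (FundamentalGroupoid.mk (E.pos (a i))) := by
        rw [← pcl_refl]
        exact (pcl_eq_iff _ _).2 hom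
      rw [E.pathOfWalk_cons, E.pathOfWalk_cons, E.pathOfWalk_cons, E.pathOfWalk_nil,
        pcl_trans, pcl_trans, pcl_trans, pcl_refl, Category.comp_id] at h1
      exact h1
    exact shortcut_key E hab hbc hca hT F.length v₀ F rfl hF
      ((E.noncontractible_iff F).1 hFnc) hcover

/-- Let `G` be a 2-cell embedding of a graph on a surface `Σ` (a compact
connected Hausdorff 2-manifold), let `F` be a noncontractible cycle of `G`, and let `𝓕` be
a family of `k` facial subgraphs of `G` whose union contains `F` (every edge of `F` lies in
one of them), each of which is a triangle (a facial 3-cycle `aᵢbᵢcᵢ`).  Then the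
edge-width of `G` is at most `|𝓕| + 2`: there is a noncontractible cycle of `G` of length
at most `k + 2`. -/
theorem edge_width_le_of_cycle_in_facial_triangles
    {V : Type*} [Fintype V] {X : Type*} [TopologicalSpace X] [T2Space X]
    [CompactSpace X] [ConnectedSpace X] [ChartedSpace (EuclideanSpace ℝ (Fin 2)) X]
    (G : SimpleGraph V) (E : SurfaceEmbedding X G)
    (h2cell : E.IsTwoCell)
    (v₀ : V) (F : G.Walk v₀ v₀) (hF : F.IsCycle) (hFnc : E.Noncontractible F)
    (k : ℕ) (a b c : Fin k → V)
    (hab : ∀ i, G.Adj (a i) (b i)) (hbc : ∀ i, G.Adj (b i) (c i))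
    (hca : ∀ i, G.Adj (c i) (a i))
    (hfacial : ∀ i, ∃ p : X, p ∉ E.image ∧
      frontier (connectedComponentIn E.imageᶜ p) =
        Set.range ⇑(E.arc (hab i)) ∪ Set.range ⇑(E.arc (hbc i)) ∪
          Set.range ⇑(E.arc (hca i)))
    (hcover : ∀ e ∈ F.edges, ∃ i, e = s(a i, b i) ∨ e = s(b i, c i) ∨ e = s(c i, a i)) :
    ∃ (w₀ : V) (w : G.Walk w₀ w₀), w.IsCycle ∧ E.Noncontractible w ∧
      w.length ≤ k + 2 := by
  exact edge_width_le_of_cycle_in_facial_triangles' G E v₀ F hF hFnc k a b c hab hbc hca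
    hcover
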